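/- With power scaling P_d = P_r/√M, the ZF downlink SINR SINR_ZF(M) = P_d ρ̂² (M − K + 1)/K divided by (P_d·J + n₀) converges, after dividing by √M, to P_r ρ̂²/(K n₀): that is, lim_{M→∞} SINR_ZF(M)/√M = P_r ρ̂²/(K n₀). -/

import Mathlib

open Filter

/-- With power scaling `P_d = P_r/√M`, the ZF downlink SINR
`SINR_ZF(M) = (P_r/√M)·ρ̂²·(M − K + 1)/K / ((P_r/√M)·J + n₀)` satisfies
`SINR_ZF(M)/√M → P_r ρ̂²/(K n₀)` as `M → ∞`. -/
theorem ZF_SINR_sqrt_scaling_limit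
    (K : ℕ) (hK : 1 ≤ K) (ρ2 J n0 Pr : ℝ)
    (hρ : 0 < ρ2) (hJ : 0 < J) (hn : 0 < n0) (hP : 0 < Pr) :
    Tendsto (fun M : ℕ =>
        ((Pr / Real.sqrt M) * ρ2 * ((M : ℝ) - K + 1) / K /
          ((Pr / Real.sqrt M) * J + n0)) / Real.sqrt M)
      atTop (nhds (Pr * ρ2 / (K * n0))) := by
  have hK0 : (0:ℝ) < K := by exact_mod_cast hK
  have hlim1 : Tendsto (fun M : ℕ => ((K:ℝ)-1)/M) atTop (nhds 0) :=
    tendsto_const_div_atTop_nhds_zero_nat _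
  have hsqrt : Tendsto (fun M : ℕ => Real.sqrt M) atTop atTop := by
    apply tendsto_atTop_atTop_of_monotone
    · intro a b hab
      exact Real.sqrt_le_sqrt (by exact_mod_cast hab)
    · intro b
      refine ⟨⌈b⌉₊^2, ?_⟩
      rw [Nat.cast_pow, Real.sqrt_sq (Nat.cast_nonneg _)]
      exact Nat.le_ceil b
  have hlim2 : Tendsto (fun M : ℕ => Pr*J/Real.sqrt M) atTop (nhds 0) :=
    Tendsto.div_atTop tendsto_const_nhds hsqrt
  have hmain : Tendsto (fun M : ℕ =>
      (Pr*ρ2*(1-((K:ℝ)-1)/M)/K)/(Pr*J/Real.sqrt M + n0)) atTop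
      (nhds (Pr * ρ2 / (K * n0))) := by
    have h := (((tendsto_const_nhds (x := Pr*ρ2)).mul
        ((tendsto_const_nhds (x := (1:ℝ))).sub hlim1)).div_const (K:ℝ)).div
        (hlim2.add (tendsto_const_nhds (x := n0))) (by positivity)
    have heq : Pr * ρ2 / ((K:ℝ) * n0) = Pr*ρ2*(1-(0:ℝ))/K/(0+n0) := by
      norm_num [div_div]
    rw [heq]; exact h
  refine hmain.congr' ?_
  filter_upwards [eventually_ge_atTop 1] with M hM
  have hM0 : (0:ℝ) < M := by exact_mod_cast Nat.lt_of_lt_of_le Nat.zero_lt_one hM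
  have hs : 0 < Real.sqrt M := Real.sqrt_pos.mpr hM0
  have hsq : Real.sqrt M * Real.sqrt M = (M:ℝ) := Real.mul_self_sqrt (le_of_lt hM0)
  have hden : 0 < Pr*J/Real.sqrt M + n0 := by positivity
  have hden2 : 0 < (Pr / Real.sqrt M) * J + n0 := by positivity
  field_simp
  ring_nf
  rw [Real.sq_sqrt hM0.le]
  ring
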